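/- Let f : ℝ → ℝ be twice continuously differentiable, even, with f(0) = 0, f''(x) > 0 for all x, f'' nonincreasing in |x|, and lim_{|x|→∞} f''(x) = 0. If 2/f''(0) < η₁ ≤ η₂ and x_{η₁} > 0, x_{η₂} > 0 satisfy η₁ f'(x_{η₁}) = 2 x_{η₁} and η₂ f'(x_{η₂}) = 2 x_{η₂}, and if moreover f''(s) < f''(t) whenever |t| < |s| (so each solution is unique), then x_{η₁} ≤ x_{η₂}; that is, x_η is monotonically increasing as a function of η. -/

import Mathlib

/-!
Since `f''` decreases strictly in `|x|`, `f'` is strictly concave on `[0, ∞)`, and `f'(0) = 0`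
because `f` is even. Hence the secant slope `f'(x) / x` through the origin is strictly decreasing
on `(0, ∞)`. The equation `η f'(x_η) = 2 x_η` says `f'(x_η) / x_η = 2 / η`, and `2 / η` decreases
in `η > 0`, so `x_η` increases with `η`.
-/

open Set

theorem deriv_zero_of_even {f : ℝ → ℝ} (heven : ∀ x, f x = f (-x)) : deriv f 0 = 0 := by
  have h := deriv_comp_neg (f := f) (x := 0)
  rw [show (fun x => f (-x)) = f from funext fun x => (heven x).symm, neg_zero] at h
  linarith

theorem StrictConcaveOn.strictAntiOn_div_of_map_zero {g : ℝ → ℝ}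
    (hg : StrictConcaveOn ℝ (Ici 0) g) (h0 : g 0 = 0) :
    StrictAntiOn (fun x => g x / x) (Ioi 0) := by
  intro x hx y hy hxy
  simpa [h0] using hg.secant_strict_mono self_mem_Ici (mem_Ici.2 (le_of_lt hx))
    (mem_Ici.2 (le_of_lt hy)) (ne_of_gt hx) (ne_of_gt hy) hxy

theorem strictConcaveOn_deriv_Ici {f : ℝ → ℝ} (hf : ContDiff ℝ 2 f)
    (hstrict : ∀ s t : ℝ, |t| < |s| → deriv (deriv f) s < deriv (deriv f) t) :
    StrictConcaveOn ℝ (Ici 0) (deriv f) := by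
  refine StrictAntiOn.strictConcaveOn_of_deriv (convex_Ici 0)
    (hf.continuous_deriv (by norm_num)).continuousOn ?_
  rw [interior_Ici]
  intro s hs t ht hst
  exact hstrict t s (by rwa [abs_of_pos hs, abs_of_pos ht])

theorem two_periodic_solution_monotone_general
    (f : ℝ → ℝ) (hf : ContDiff ℝ 2 f)
    (heven : ∀ x : ℝ, f x = f (-x))
    (hpos : ∀ x : ℝ, 0 < deriv (deriv f) x)
    (hstrict : ∀ s t : ℝ, |t| < |s| → deriv (deriv f) s < deriv (deriv f) t)
    (η₁ η₂ : ℝ) (hη₁ : 2 / deriv (deriv f) 0 < η₁) (hη₁₂ : η₁ ≤ η₂)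
    (x₁ x₂ : ℝ) (hx₁ : 0 < x₁) (hx₂ : 0 < x₂)
    (heq₁ : η₁ * deriv f x₁ = 2 * x₁) (heq₂ : η₂ * deriv f x₂ = 2 * x₂) :
    x₁ ≤ x₂ := by
  have hη₁_pos : 0 < η₁ := (div_pos two_pos (hpos 0)).trans hη₁
  have hη₂_pos : 0 < η₂ := hη₁_pos.trans_le hη₁₂
  have hslope₁ : deriv f x₁ / x₁ = 2 / η₁ := by
    rw [div_eq_div_iff hx₁.ne' hη₁_pos.ne']; linarith
  have hslope₂ : deriv f x₂ / x₂ = 2 / η₂ := by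
    rw [div_eq_div_iff hx₂.ne' hη₂_pos.ne']; linarith
  have hslope_anti := (strictConcaveOn_deriv_Ici hf hstrict).strictAntiOn_div_of_map_zero
    (deriv_zero_of_even heven)
  by_contra! hlt
  have hslope_lt := hslope_anti hx₂ hx₁ hlt
  simp only [hslope₁, hslope₂] at hslope_lt
  linarith [div_le_div_of_nonneg_left zero_le_two hη₁_pos hη₁₂]

/-- With strictly subquadratic `f` (so the positive solution of
`η f'(x) = 2x` is unique for each `η > 2/f''(0)`), the solution `x_η` is
monotonically increasing in `η`. -/
theorem two_periodic_solution_monotone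
    (f : ℝ → ℝ) (hf : ContDiff ℝ 2 f)
    (heven : ∀ x : ℝ, f x = f (-x)) (h0 : f 0 = 0)
    (hpos : ∀ x : ℝ, 0 < deriv (deriv f) x)
    (hanti : ∀ s t : ℝ, |t| ≤ |s| → deriv (deriv f) s ≤ deriv (deriv f) t)
    (hstrict : ∀ s t : ℝ, |t| < |s| → deriv (deriv f) s < deriv (deriv f) t)
    (hlim : Filter.Tendsto (deriv (deriv f)) (Filter.cocompact ℝ) (nhds 0))
    (η₁ η₂ : ℝ) (hη₁ : 2 / deriv (deriv f) 0 < η₁) (hη₁₂ : η₁ ≤ η₂)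
    (x₁ x₂ : ℝ) (hx₁ : 0 < x₁) (hx₂ : 0 < x₂)
    (heq₁ : η₁ * deriv f x₁ = 2 * x₁) (heq₂ : η₂ * deriv f x₂ = 2 * x₂) :
    x₁ ≤ x₂ :=
  two_periodic_solution_monotone_general f hf heven hpos hstrict η₁ η₂ hη₁ hη₁₂ x₁ x₂ hx₁ hx₂ heq₁
    heq₂
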